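/- arXiv:1208.3330 — 8 statements merged into one kernel-verified Lean document; each statement's English description precedes it below -/
import Mathlib

section
/- Let A be an n × n matrix with entries in {+1, -1} and let m be an integer with n ≥ m > 1. Then the sum of det(M)² over all m × m submatrices M of A (obtained by choosing m rows and m columns of A) is at most n^m · C(n,m), where C(n,m) is the binomial coefficient. Equivalently, the mean value of det(M)² over all C(n,m)² such submatrices is at most n^m / C(n,m). -/
/-!
Fix a choice of `m` rows and let `B` be the resulting `m × n` submatrix of `A`. By the
Cauchy–Binet formula, the sum of `det (B.submatrix id g) ^ 2` over all column choices `g` is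
`det (B * Bᵀ)`. The Gram matrix `B * Bᵀ` is positive semidefinite and its diagonal entries equal
`n`, so AM–GM applied to its eigenvalues (product `det`, sum `trace = m * n`) gives
`det (B * Bᵀ) ≤ n ^ m`. Summing over the `C(n, m)` row choices gives the bound.
-/

open Finset Matrix Equiv

section StrictMono

variable (m : ℕ) (α : Type*) [LinearOrder α]

noncomputable def permProdStrictMonoEquivInjective :
    Perm (Fin m) × {g : Fin m → α // StrictMono g} ≃ {f : Fin m → α // Function.Injective f} :=
  Equiv.ofBijective (fun p => ⟨p.2.1 ∘ p.1, p.2.2.injective.comp p.1.injective⟩) <| by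
    constructor
    · rintro ⟨σ, g, hg⟩ ⟨τ, g', hg'⟩ h
      have hcomp : g ∘ σ = g' ∘ τ := congrArg Subtype.val h
      have hrange : Set.range g = Set.range g' := by
        rw [← σ.surjective.range_comp, hcomp, τ.surjective.range_comp]
      obtain rfl : g = g' := (hg.range_inj hg').mp hrange
      obtain rfl : σ = τ := Equiv.ext fun i => hg.injective (congrFun hcomp i)
      rfl
    · rintro ⟨f, hf⟩
      refine ⟨((Tuple.sort f)⁻¹, ⟨f ∘ Tuple.sort f,
        (Tuple.monotone_sort f).strictMono_of_injective (hf.comp (Tuple.sort f).injective)⟩), ?_⟩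
      ext i
      simp

variable {m α} [Fintype α]

theorem card_strictMono_fin :
    Fintype.card {g : Fin m → α // StrictMono g} = (Fintype.card α).choose m := by
  classical
  have h := Fintype.card_congr (permProdStrictMonoEquivInjective m α)
  rw [Fintype.card_prod, Fintype.card_perm, Fintype.card_fin,
    Fintype.card_congr (Equiv.subtypeInjectiveEquivEmbedding _ _), Fintype.card_embedding_eq,
    Fintype.card_fin, Nat.descFactorial_eq_factorial_mul_choose] at h
  exact Nat.eq_of_mul_eq_mul_left m.factorial_pos h

theorem sum_eq_sum_strictMono_sum_perm {R : Type*} [AddCommMonoid R] (φ : (Fin m → α) → R)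
    (hφ : ∀ f, ¬ Function.Injective f → φ f = 0) :
    ∑ f, φ f = ∑ g : {g : Fin m → α // StrictMono g}, ∑ σ : Perm (Fin m), φ (g.1 ∘ σ) := by
  classical
  calc ∑ f, φ f = ∑ f : {f : Fin m → α // Function.Injective f}, φ f := by
        rw [← Finset.sum_subset (Finset.subset_univ {f | Function.Injective f})
          (fun f _ hf => hφ f (by simpa using hf))]
        exact Finset.sum_subtype _ (by simp) _
    _ = ∑ p : Perm (Fin m) × {g : Fin m → α // StrictMono g}, φ (p.2.1 ∘ p.1) :=
        ((permProdStrictMonoEquivInjective m α).sum_comp (fun f => φ f)).symm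
    _ = _ := by rw [Fintype.sum_prod_type, Finset.sum_comm]

end StrictMono

namespace Matrix

variable {R : Type*} [CommRing R]

theorem det_mul_eq_sum_prod_mul_det_submatrix {ι κ : Type*} [Fintype ι] [DecidableEq ι]
    [Fintype κ] (M : Matrix ι κ R) (N : Matrix κ ι R) :
    det (M * N) = ∑ p : ι → κ, (∏ i, N (p i) i) * det (M.submatrix id p) := by
  simp only [det_apply', mul_apply, prod_univ_sum, Finset.mul_sum,
    Fintype.piFinset_univ, submatrix_apply, id]
  rw [Finset.sum_comm]
  refine Finset.sum_congr rfl fun p _ => Finset.sum_congr rfl fun σ _ => ?_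
  rw [prod_mul_distrib]
  ring

theorem det_mul_eq_sum_det_submatrix_mul_det_submatrix {m : ℕ} {α : Type*} [LinearOrder α]
    [Fintype α] (M : Matrix (Fin m) α R) (N : Matrix α (Fin m) R) :
    det (M * N) = ∑ g : {g : Fin m → α // StrictMono g},
      det (M.submatrix id g.1) * det (N.submatrix g.1 id) := by
  rw [det_mul_eq_sum_prod_mul_det_submatrix, sum_eq_sum_strictMono_sum_perm]
  · refine Finset.sum_congr rfl fun g _ => ?_
    have hperm (σ : Perm (Fin m)) :
        M.submatrix id (g.1 ∘ σ) = (M.submatrix id g.1).submatrix id σ := rfl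
    simp only [hperm, det_permute', det_apply' (N.submatrix g.1 id), Finset.mul_sum]
    refine Finset.sum_congr rfl fun σ _ => ?_
    simp only [submatrix_apply, id, Function.comp_apply]
    ring
  · intro p hp
    obtain ⟨i, j, hij, hne⟩ := Function.not_injective_iff.mp hp
    rw [det_zero_of_column_eq hne fun k => by simp [hij], mul_zero]

theorem sum_det_submatrix_sq_eq_det_mul_transpose {m : ℕ} {α : Type*} [LinearOrder α]
    [Fintype α] (B : Matrix (Fin m) α R) :
    ∑ g : {g : Fin m → α // StrictMono g}, det (B.submatrix id g.1) ^ 2 = det (B * Bᵀ) := by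
  simp only [det_mul_eq_sum_det_submatrix_mul_det_submatrix, ← transpose_submatrix,
    det_transpose, sq]

end Matrix

theorem Real.prod_le_pow_card_of_sum_le {ι : Type*} [Fintype ι] {x : ι → ℝ} {c : ℝ}
    (hx : ∀ i, 0 ≤ x i) (hsum : ∑ i, x i ≤ Fintype.card ι * c) :
    ∏ i, x i ≤ c ^ Fintype.card ι := by
  rcases (Fintype.card ι).eq_zero_or_pos with hι | hι
  · simp [Fintype.card_eq_zero_iff.mp hι]
  set k : ℝ := (Fintype.card ι : ℝ)
  have hk : 0 < k := by positivity
  have hgm : ∏ i, x i ^ k⁻¹ ≤ c :=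
    calc ∏ i, x i ^ k⁻¹ ≤ ∑ i, k⁻¹ * x i :=
          Real.geom_mean_le_arith_mean_weighted _ _ _ (fun _ _ => by positivity)
            (by simp [k, hk.ne']) fun i _ => hx i
      _ ≤ c := by rw [← Finset.mul_sum, inv_mul_le_iff₀ hk]; exact hsum
  calc ∏ i, x i = (∏ i, x i ^ k⁻¹) ^ Fintype.card ι := by
        rw [← Finset.prod_pow]
        refine Finset.prod_congr rfl fun i _ => ?_
        rw [← Real.rpow_natCast, ← Real.rpow_mul (hx i), inv_mul_cancel₀ hk.ne', Real.rpow_one]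
    _ ≤ c ^ Fintype.card ι :=
        pow_le_pow_left₀ (Finset.prod_nonneg fun i _ => Real.rpow_nonneg (hx i) _) hgm _

theorem Matrix.PosSemidef.det_le_pow_of_trace_le {ι : Type*} [Fintype ι] [DecidableEq ι]
    {A : Matrix ι ι ℝ} (hA : A.PosSemidef) {c : ℝ} (htr : A.trace ≤ Fintype.card ι * c) :
    A.det ≤ c ^ Fintype.card ι := by
  rw [hA.1.det_eq_prod_eigenvalues]
  rw [hA.1.trace_eq_sum_eigenvalues] at htr
  exact Real.prod_le_pow_card_of_sum_le hA.eigenvalues_nonneg (by simpa using htr)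

theorem Matrix.det_mul_transpose_le_of_abs_le_one {ι κ : Type*} [Fintype ι] [DecidableEq ι]
    [Fintype κ] (B : Matrix ι κ ℤ) (hB : ∀ i j, |B i j| ≤ 1) :
    det (B * Bᵀ) ≤ (Fintype.card κ : ℤ) ^ Fintype.card ι := by
  set C : Matrix ι κ ℝ := B.map (↑)
  have hcast : ((det (B * Bᵀ) : ℤ) : ℝ) = det (C * Cᵀ) := by
    rw [Int.cast_det, ← transpose_map]
    exact congrArg det (Matrix.map_mul (f := Int.castRingHom ℝ))
  have hpsd : (C * Cᵀ).PosSemidef := by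
    simpa using posSemidef_self_mul_conjTranspose C
  have htr : (C * Cᵀ).trace ≤ Fintype.card ι * Fintype.card κ := by
    have hdiag (i : ι) : (C * Cᵀ) i i ≤ Fintype.card κ :=
      calc (C * Cᵀ) i i = ∑ j, ((B i j : ℤ) : ℝ) ^ 2 := by simp [mul_apply, C, sq]
        _ ≤ ∑ _j : κ, (1 : ℝ) := by
          gcongr with j
          exact_mod_cast (sq_le_one_iff_abs_le_one _).mpr (hB i j)
        _ = Fintype.card κ := by simp
    simpa [trace] using Finset.sum_le_sum fun i (_ : i ∈ univ) => hdiag i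
  exact_mod_cast hcast ▸ hpsd.det_le_pow_of_trace_le htr

theorem sum_sq_minors_le_general (n m : ℕ)
    (A : Matrix (Fin n) (Fin n) ℤ) (hA : ∀ i j, A i j = 1 ∨ A i j = -1) :
    ∑ f : {f : Fin m → Fin n // StrictMono f},
      ∑ g : {g : Fin m → Fin n // StrictMono g},
        (A.submatrix f.1 g.1).det ^ 2 ≤ (n : ℤ) ^ m * (n.choose m : ℤ) := by
  have habs (i j) : |A i j| ≤ 1 := by rcases hA i j with h | h <;> simp [h]
  calc ∑ f : {f : Fin m → Fin n // StrictMono f}, ∑ g : {g : Fin m → Fin n // StrictMono g},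
        (A.submatrix f.1 g.1).det ^ 2
      = ∑ f : {f : Fin m → Fin n // StrictMono f},
          det (A.submatrix f.1 id * (A.submatrix f.1 id)ᵀ) :=
        Finset.sum_congr rfl fun f _ =>
          sum_det_submatrix_sq_eq_det_mul_transpose (A.submatrix f.1 id)
    _ ≤ ∑ _f : {f : Fin m → Fin n // StrictMono f}, (n : ℤ) ^ m := by
        gcongr with f
        exact (det_mul_transpose_le_of_abs_le_one _ fun i j => habs (f.1 i) j).trans_eq (by simp)
    _ = (n : ℤ) ^ m * (n.choose m : ℤ) := by
        simp [card_strictMono_fin, mul_comm]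

/-- The sum of squared minors of order `m` of an `n × n` `{±1}`-matrix `A`
(over all choices of `m` rows and `m` columns, i.e. all pairs of strictly
monotone index maps `Fin m → Fin n`) is at most `n^m * C(n,m)`. -/
theorem sum_sq_minors_le (n m : ℕ) (hm : 1 < m) (hmn : m ≤ n)
    (A : Matrix (Fin n) (Fin n) ℤ) (hA : ∀ i j, A i j = 1 ∨ A i j = -1) :
    ∑ f : {f : Fin m → Fin n // StrictMono f},
      ∑ g : {g : Fin m → Fin n // StrictMono g},
        (A.submatrix f.1 g.1).det ^ 2 ≤ (n : ℤ) ^ m * (n.choose m : ℤ) :=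
  sum_sq_minors_le_general n m A hA
end

section
/- Let H be a Hadamard matrix of order n, i.e., an n × n {+1,-1}-matrix with H·Hᵀ = n·I, and let m be an integer with n ≥ m > 1. Then the sum of det(M)² over all m × m submatrices M of H equals exactly n^m · C(n,m); equivalently, the mean of det(M)² over all C(n,m)² submatrices of order m is n^m / C(n,m). -/
/-!
If `A` consists of `m` rows of `H`, then `A * Aᵀ = n • 1`, so by the Cauchy–Binet formula the sum
of `det (A.submatrix id g) ^ 2` over all column selections `g` is `det (A * Aᵀ) = n ^ m`.
Summing over the `C(n, m)` row selections gives `n ^ m * C(n, m)`.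
-/

open Matrix Finset Equiv Function

theorem StrictMono.injective_comp_perm {α β : Type*} [LinearOrder α] [WellFoundedLT α]
    [Preorder β] :
    Injective fun x : {f : α → β // StrictMono f} × Perm α => x.1.1 ∘ x.2 := by
  rintro ⟨⟨f, hf⟩, σ⟩ ⟨⟨g, hg⟩, τ⟩ h
  have hfg : f = g := (hf.range_inj hg).mp <| by
    rw [← σ.surjective.range_comp f, ← τ.surjective.range_comp g]
    exact congrArg Set.range h
  subst hfg
  have hστ : σ = τ := Equiv.ext fun i => hf.injective (congrFun h i)
  rw [hστ]

theorem Function.Injective.exists_strictMono_comp_perm {m : ℕ} {ι : Type*} [LinearOrder ι]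
    {p : Fin m → ι} (hp : Injective p) :
    ∃ (f : {f : Fin m → ι // StrictMono f}) (σ : Perm (Fin m)), f.1 ∘ σ = p := by
  refine ⟨⟨p ∘ Tuple.sort p, (Tuple.monotone_sort p).strictMono_of_injective
    (hp.comp (Tuple.sort p).injective)⟩, (Tuple.sort p)⁻¹, ?_⟩
  ext i
  simp

def strictMonoEquivOrderEmbedding (α β : Type*) [LinearOrder α] [Preorder β] :
    {f : α → β // StrictMono f} ≃ (α ↪o β) where
  toFun f := OrderEmbedding.ofStrictMono f.1 f.2
  invFun e := ⟨e, e.strictMono⟩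

theorem card_subtype_strictMono (m : ℕ) (ι : Type*) [Fintype ι] [LinearOrder ι] :
    Fintype.card {f : Fin m → ι // StrictMono f} = (Fintype.card ι).choose m := by
  rw [← Nat.card_eq_fintype_card, ← Nat.card_eq_fintype_card,
    Nat.card_congr ((strictMonoEquivOrderEmbedding _ _).trans Set.powersetCard.ofFinEmbEquiv),
    Set.powersetCard.card]

namespace Matrix

variable {R : Type*} [CommRing R]

theorem det_mul_eq_sum_det_submatrix_mul_prod {n ι : Type*} [Fintype n] [DecidableEq n]
    [Fintype ι] (A : Matrix n ι R) (B : Matrix ι n R) :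
    det (A * B) = ∑ p : n → ι, det (A.submatrix id p) * ∏ i, B (p i) i := by
  simp only [det_apply', mul_apply, prod_univ_sum, mul_sum, Fintype.piFinset_univ]
  rw [sum_comm]
  refine sum_congr rfl fun p _ => ?_
  rw [sum_mul]
  refine sum_congr rfl fun σ _ => ?_
  simp only [submatrix_apply, id_eq, prod_mul_distrib]
  ring

theorem det_submatrix_comp_perm {n ι : Type*} [Fintype n] [DecidableEq n]
    (A : Matrix n ι R) (f : n → ι) (σ : Perm n) :
    det (A.submatrix id (f ∘ σ)) = Perm.sign σ * det (A.submatrix id f) := by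
  rw [← det_permute', submatrix_submatrix]
  rfl

theorem det_mul_eq_sum_strictMono {ι : Type*} [Fintype ι] [LinearOrder ι] {m : ℕ}
    (A : Matrix (Fin m) ι R) (B : Matrix ι (Fin m) R) :
    det (A * B) = ∑ f : {f : Fin m → ι // StrictMono f},
      det (A.submatrix id f.1) * det (B.submatrix f.1 id) := by
  have hfactor : ∀ f : {f : Fin m → ι // StrictMono f},
      det (A.submatrix id f.1) * det (B.submatrix f.1 id) =
        ∑ σ : Perm (Fin m), det (A.submatrix id (f.1 ∘ σ)) * ∏ i, B (f.1 (σ i)) i := by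
    intro f
    simp only [det_submatrix_comp_perm, det_apply' (B.submatrix f.1 id), mul_sum,
      submatrix_apply, id_eq, mul_left_comm, mul_assoc]
  rw [det_mul_eq_sum_det_submatrix_mul_prod, sum_congr rfl fun f _ => hfactor f,
    ← Fintype.sum_prod_type']
  symm
  -- Injective `p` are exactly the `f ∘ σ`; any other `p` repeats a column of `A.submatrix id p`.
  refine sum_of_injOn (fun x => x.1.1 ∘ x.2) StrictMono.injective_comp_perm.injOn
    (fun _ _ => mem_univ _) (fun p _ hp => ?_) fun _ _ => rfl
  have hnotinj : ¬ Injective p := fun hinj => hp <| by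
    obtain ⟨f, σ, hfσ⟩ := hinj.exists_strictMono_comp_perm
    exact ⟨(f, σ), mem_coe.mpr (mem_univ _), hfσ⟩
  obtain ⟨i, j, hij, hne⟩ : ∃ i j, p i = p j ∧ i ≠ j := by
    simpa [Injective] using hnotinj
  rw [det_zero_of_column_eq hne fun k => by simp [hij], zero_mul]

theorem sum_sq_det_submatrix_eq_det_mul_transpose {ι : Type*} [Fintype ι] [LinearOrder ι]
    {m : ℕ} (A : Matrix (Fin m) ι R) :
    ∑ g : {g : Fin m → ι // StrictMono g}, det (A.submatrix id g.1) ^ 2 = det (A * Aᵀ) := by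
  rw [det_mul_eq_sum_strictMono]
  refine sum_congr rfl fun g _ => ?_
  rw [← transpose_submatrix, det_transpose, sq]

theorem sum_sq_det_submatrix_of_mul_transpose_eq_smul_one {ι : Type*} [Fintype ι]
    [LinearOrder ι] {m : ℕ} {H : Matrix ι ι R} {c : R} (hH : H * Hᵀ = c • (1 : Matrix ι ι R))
    {f : Fin m → ι} (hf : Injective f) :
    ∑ g : {g : Fin m → ι // StrictMono g}, det (H.submatrix f g.1) ^ 2 = c ^ m := by
  have hrows : H.submatrix f id * (H.submatrix f id)ᵀ = c • (1 : Matrix (Fin m) (Fin m) R) := by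
    rw [transpose_submatrix, ← submatrix_mul _ _ _ _ _ bijective_id, hH, submatrix_smul,
      Pi.smul_apply, Pi.smul_apply, submatrix_one f hf]
  have hgram := sum_sq_det_submatrix_eq_det_mul_transpose (H.submatrix f id)
  rw [hrows, det_smul, det_one, mul_one, Fintype.card_fin] at hgram
  simpa only [submatrix_submatrix, comp_id, id_comp] using hgram

end Matrix

theorem sum_sq_minors_hadamard_general (n m : ℕ)
    (H : Matrix (Fin n) (Fin n) ℤ)
    (hH : H * Hᵀ = (n : ℤ) • (1 : Matrix (Fin n) (Fin n) ℤ)) :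
    ∑ f : {f : Fin m → Fin n // StrictMono f},
      ∑ g : {g : Fin m → Fin n // StrictMono g},
        (H.submatrix f.1 g.1).det ^ 2 = (n : ℤ) ^ m * (n.choose m : ℤ) := by
  simp only [fun f : {f : Fin m → Fin n // StrictMono f} =>
    sum_sq_det_submatrix_of_mul_transpose_eq_smul_one hH f.2.injective]
  rw [sum_const, card_univ, card_subtype_strictMono, Fintype.card_fin, nsmul_eq_mul, mul_comm]

/-- For a Hadamard matrix `H` of order `n` (an `n × n` `{±1}`-matrix with
`H * Hᵀ = n • 1`) and `n ≥ m > 1`, the sum of squared minors of order `m`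
(over all pairs of strictly monotone index maps `Fin m → Fin n`)
equals exactly `n^m * C(n,m)`. -/
theorem sum_sq_minors_hadamard (n m : ℕ) (hm : 1 < m) (hmn : m ≤ n)
    (H : Matrix (Fin n) (Fin n) ℤ) (hH1 : ∀ i j, H i j = 1 ∨ H i j = -1)
    (hH : H * Hᵀ = (n : ℤ) • (1 : Matrix (Fin n) (Fin n) ℤ)) :
    ∑ f : {f : Fin m → Fin n // StrictMono f},
      ∑ g : {g : Fin m → Fin n // StrictMono g},
        (H.submatrix f.1 g.1).det ^ 2 = (n : ℤ) ^ m * (n.choose m : ℤ) :=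
  sum_sq_minors_hadamard_general n m H hH
end

section
/- Let A be an n × n {+1,-1}-matrix and m ∈ {2, 3} with n ≥ m. Then equality holds in the bound 4^(m-1)·Y(m,A) ≤ n^m·C(n,m) (where Y(m,A) is the number of nonzero minors of order m of A) if and only if A is a Hadamard matrix. In particular, for a Hadamard matrix H of order n and m ∈ {2,3}, one has Y(m,H) = n^m·C(n,m)/4^(m-1). -/
open Matrix Finset Equiv

variable {m n : ℕ}

-- test equiv + card
def smEquiv (m n : ℕ) : {g : Fin m → Fin n // StrictMono g} ≃ {s : Finset (Fin n) // s.card = m} where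
  toFun g := ⟨Finset.univ.image g.1, by
    rw [Finset.card_image_of_injective _ g.2.injective, Finset.card_univ, Fintype.card_fin]⟩
  invFun s := ⟨s.1.orderEmbOfFin s.2, (s.1.orderEmbOfFin s.2).strictMono⟩
  left_inv g := by
    apply Subtype.ext
    exact (Finset.orderEmbOfFin_unique _ (fun x => Finset.mem_image_of_mem _ (Finset.mem_univ x)) g.2).symm
  right_inv s := by
    apply Subtype.ext
    rw [← Finset.coe_inj, Finset.coe_image, Finset.coe_univ, Set.image_univ]
    exact Finset.range_orderEmbOfFin s.1 s.2

lemma card_strictMonoMaps (m n : ℕ) : Fintype.card {g : Fin m → Fin n // StrictMono g} = n.choose m := by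
  rw [Fintype.card_congr (smEquiv m n), Fintype.card_finset_len, Fintype.card_fin]

lemma det_apply_col (M : Matrix (Fin m) (Fin m) ℤ) :
    det M = ∑ σ : Perm (Fin m), ((Perm.sign σ : ℤˣ) : ℤ) * ∏ i, M i (σ i) := by
  conv_lhs => rw [← det_transpose M, det_apply']
  simp only [transpose_apply, Int.cast_id]

lemma det_mul_transpose_expand (B C : Matrix (Fin m) (Fin n) ℤ) :
    det (B * Cᵀ) = ∑ p : Fin m → Fin n, (∏ i, C i (p i)) * det (B.submatrix id p) := by
  calc det (B * Cᵀ)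
      = ∑ σ : Perm (Fin m), ∑ p : Fin m → Fin n,
          ((Perm.sign σ : ℤˣ) : ℤ) * ∏ i, B (σ i) (p i) * C i (p i) := by
        simp only [det_apply', mul_apply, transpose_apply, Finset.prod_univ_sum,
          Fintype.piFinset_univ, Finset.mul_sum, Int.cast_id]
    _ = ∑ p : Fin m → Fin n, ∑ σ : Perm (Fin m),
          ((Perm.sign σ : ℤˣ) : ℤ) * ∏ i, B (σ i) (p i) * C i (p i) := Finset.sum_comm
    _ = ∑ p : Fin m → Fin n, (∏ i, C i (p i)) * det (B.submatrix id p) := by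
        refine Finset.sum_congr rfl fun p _ => ?_
        rw [det_apply', Finset.mul_sum]
        refine Finset.sum_congr rfl fun σ _ => ?_
        simp only [submatrix_apply, id_eq, Finset.prod_mul_distrib, Int.cast_id]
        ring

lemma sum_strictMono_perm (F : (Fin m → Fin n) → ℤ) :
    ∑ p ∈ Finset.univ.filter (fun p : Fin m → Fin n => Function.Injective p), F p
      = ∑ x : {g : Fin m → Fin n // StrictMono g} × Perm (Fin m), F (x.1.1 ∘ x.2) := by
  refine (Finset.sum_bij (fun (x : {g : Fin m → Fin n // StrictMono g} × Perm (Fin m)) _ =>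
      x.1.1 ∘ x.2) (fun x _ => ?_) (fun x _ y _ h => ?_) (fun b hb => ?_) (fun x _ => rfl)).symm
  · exact Finset.mem_filter.2 ⟨Finset.mem_univ _, x.1.2.injective.comp x.2.injective⟩
  · -- injectivity
    obtain ⟨⟨g, hg⟩, σ⟩ := x
    obtain ⟨⟨g', hg'⟩, σ'⟩ := y
    have hr : Set.range g = Set.range g' := by
      rw [← σ.surjective.range_comp g, ← σ'.surjective.range_comp g']
      exact congrArg Set.range h
    have inst : WellFoundedLT (Fin m) := inferInstance
    have hgg : g = g' := (@StrictMono.range_inj (Fin m) (Fin n) _ _ inst g g' hg hg').1 hr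
    subst hgg
    have hσ : σ = σ' := Equiv.ext fun i => hg.injective (congrFun h i)
    rw [hσ]
  · -- surjectivity
    have hb' : Function.Injective b := (Finset.mem_filter.1 hb).2
    set s : Finset (Fin n) := Finset.univ.image b with hs
    have hsc : s.card = m := by
      rw [hs, Finset.card_image_of_injective _ hb', Finset.card_univ, Fintype.card_fin]
    have hmem : ∀ i, b i ∈ s := fun i => Finset.mem_image_of_mem _ (Finset.mem_univ i)
    set τ : Fin m → Fin m := fun i => (s.orderIsoOfFin hsc).symm ⟨b i, hmem i⟩ with hτ
    have hτinj : Function.Injective τ := by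
      intro i j hij
      apply hb'
      have := congrArg (s.orderIsoOfFin hsc) hij
      simpa [hτ] using congrArg Subtype.val this
    refine ⟨⟨⟨s.orderEmbOfFin hsc, (s.orderEmbOfFin hsc).strictMono⟩,
      Equiv.ofBijective τ (Finite.injective_iff_bijective.mp hτinj)⟩, Finset.mem_univ _, ?_⟩
    funext i
    show s.orderEmbOfFin hsc (τ i) = b i
    rw [← Finset.coe_orderIsoOfFin_apply, hτ, OrderIso.apply_symm_apply]

theorem cauchy_binet (B C : Matrix (Fin m) (Fin n) ℤ) :
    det (B * Cᵀ) = ∑ g : {g : Fin m → Fin n // StrictMono g},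
      det (B.submatrix id g.1) * det (C.submatrix id g.1) := by
  rw [det_mul_transpose_expand]
  have h0 : ∀ p ∈ (Finset.univ : Finset (Fin m → Fin n)),
      (∏ i, C i (p i)) * det (B.submatrix id p) ≠ 0 → Function.Injective p := by
    intro p _ hne
    by_contra hinj
    obtain ⟨a, b, hab, hne'⟩ := Function.not_injective_iff.mp hinj
    exact hne (by rw [det_zero_of_column_eq hne' (fun k => by simp [hab]), mul_zero])
  rw [← Finset.sum_filter_of_ne h0, sum_strictMono_perm, Fintype.sum_prod_type]
  refine Finset.sum_congr rfl fun g _ => ?_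
  have key : ∀ σ : Perm (Fin m),
      (∏ i, C i ((g.1 ∘ σ) i)) * det (B.submatrix id (g.1 ∘ σ))
        = det (B.submatrix id g.1) *
            (((Perm.sign σ : ℤˣ) : ℤ) * ∏ i, (C.submatrix id g.1) i (σ i)) := by
    intro σ
    have h1 : B.submatrix id (g.1 ∘ σ) = (B.submatrix id g.1).submatrix id σ := by
      simp [submatrix_submatrix]
    rw [h1, det_permute']
    simp only [submatrix_apply, id_eq, Function.comp_apply, Int.cast_id]
    ring
  rw [Finset.sum_congr rfl (fun σ _ => key σ), ← Finset.mul_sum, ← det_apply_col]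

lemma det2_pm (M : Matrix (Fin 2) (Fin 2) ℤ) (h : ∀ i j, M i j = 1 ∨ M i j = -1) :
    M.det = 0 ∨ M.det ^ 2 = 4 := by
  rw [det_fin_two]
  rcases h 0 0 with h00|h00 <;> rcases h 0 1 with h01|h01 <;> rcases h 1 0 with h10|h10 <;>
    rcases h 1 1 with h11|h11 <;> rw [h00, h01, h10, h11] <;> norm_num

set_option maxHeartbeats 1600000 in
lemma det3_pm (M : Matrix (Fin 3) (Fin 3) ℤ) (h : ∀ i j, M i j = 1 ∨ M i j = -1) :
    M.det = 0 ∨ M.det ^ 2 = 16 := by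
  rw [det_fin_three]
  rcases h 0 0 with h00|h00 <;> rcases h 0 1 with h01|h01 <;> rcases h 0 2 with h02|h02 <;>
    rcases h 1 0 with h10|h10 <;> rcases h 1 1 with h11|h11 <;> rcases h 1 2 with h12|h12 <;>
    rcases h 2 0 with h20|h20 <;> rcases h 2 1 with h21|h21 <;> rcases h 2 2 with h22|h22 <;>
    rw [h00, h01, h02, h10, h11, h12, h20, h21, h22] <;> decide

-- G facts

lemma G_apply (A : Matrix (Fin n) (Fin n) ℤ) (i j : Fin n) :
    (A * Aᵀ) i j = ∑ c, A i c * A j c := by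
  simp [mul_apply, transpose_apply]

lemma G_symm (A : Matrix (Fin n) (Fin n) ℤ) (i j : Fin n) :
    (A * Aᵀ) j i = (A * Aᵀ) i j := by
  rw [G_apply, G_apply]
  exact Finset.sum_congr rfl fun c _ => mul_comm _ _

lemma G_diag (A : Matrix (Fin n) (Fin n) ℤ) (hA : ∀ i j, A i j = 1 ∨ A i j = -1) (i : Fin n) :
    (A * Aᵀ) i i = (n : ℤ) := by
  rw [G_apply]
  rw [Finset.sum_congr rfl (fun c _ => show A i c * A i c = 1 by
    rcases hA i c with h|h <;> rw [h] <;> norm_num)]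
  simp

lemma G_bound (A : Matrix (Fin n) (Fin n) ℤ) (hA : ∀ i j, A i j = 1 ∨ A i j = -1) (i j : Fin n) :
    |(A * Aᵀ) i j| ≤ (n : ℤ) := by
  rw [G_apply]
  calc |∑ c, A i c * A j c| ≤ ∑ c, |A i c * A j c| := Finset.abs_sum_le_sum_abs _ _
    _ = ∑ _c : Fin n, (1 : ℤ) := Finset.sum_congr rfl fun c _ => by
        rcases hA i c with h|h <;> rcases hA j c with h'|h' <;> rw [h, h'] <;> norm_num
    _ = (n : ℤ) := by simp

lemma sum_det_sq (A : Matrix (Fin n) (Fin n) ℤ) (f : Fin m → Fin n) :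
    ∑ g : {g : Fin m → Fin n // StrictMono g}, det (A.submatrix f g.1) ^ 2
      = det ((A * Aᵀ).submatrix f f) := by
  have h : (A.submatrix f id) * (A.submatrix f id)ᵀ = (A * Aᵀ).submatrix f f := by
    ext i j
    simp [mul_apply, transpose_apply]
  rw [← h, cauchy_binet]
  refine Finset.sum_congr rfl fun g _ => ?_
  rw [sq]
  congr 1

lemma detG2 (A : Matrix (Fin n) (Fin n) ℤ) (hA : ∀ i j, A i j = 1 ∨ A i j = -1)
    (f : {f : Fin 2 → Fin n // StrictMono f}) :
    det ((A * Aᵀ).submatrix f.1 f.1) ≤ (n : ℤ) ^ 2 ∧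
      (det ((A * Aᵀ).submatrix f.1 f.1) = (n : ℤ) ^ 2 ↔
        ∀ a b, a ≠ b → (A * Aᵀ) (f.1 a) (f.1 b) = 0) := by
  obtain ⟨f, hf⟩ := f
  have e : det ((A * Aᵀ).submatrix f f) = (n:ℤ)^2 - ((A * Aᵀ) (f 0) (f 1))^2 := by
    rw [det_fin_two]
    simp only [submatrix_apply]
    rw [G_diag A hA, G_diag A hA, G_symm A (f 0) (f 1)]
    ring
  refine ⟨by rw [e]; nlinarith [sq_nonneg ((A * Aᵀ) (f 0) (f 1))], ?_, ?_⟩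
  · intro h a b hab
    have hsq : ((A * Aᵀ) (f 0) (f 1))^2 = 0 := by rw [e] at h; linarith
    have hp0 : (A * Aᵀ) (f 0) (f 1) = 0 := by
      exact pow_eq_zero_iff (by norm_num) |>.mp hsq
    have hp1 : (A * Aᵀ) (f 1) (f 0) = 0 := (G_symm A (f 0) (f 1)).trans hp0
    fin_cases a <;> fin_cases b <;> simp_all
  · intro h
    rw [e, h 0 1 (by decide)]
    ring

lemma detG3 (hn : 3 ≤ n) (A : Matrix (Fin n) (Fin n) ℤ) (hA : ∀ i j, A i j = 1 ∨ A i j = -1)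
    (f : {f : Fin 3 → Fin n // StrictMono f}) :
    det ((A * Aᵀ).submatrix f.1 f.1) ≤ (n : ℤ) ^ 3 ∧
      (det ((A * Aᵀ).submatrix f.1 f.1) = (n : ℤ) ^ 3 ↔
        ∀ a b, a ≠ b → (A * Aᵀ) (f.1 a) (f.1 b) = 0) := by
  obtain ⟨f, hf⟩ := f
  have hn' : (3 : ℤ) ≤ (n : ℤ) := by exact_mod_cast hn
  obtain ⟨hp1, hp2⟩ := abs_le.mp (G_bound A hA (f 0) (f 1))
  obtain ⟨hq1, hq2⟩ := abs_le.mp (G_bound A hA (f 0) (f 2))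
  obtain ⟨hr1, hr2⟩ := abs_le.mp (G_bound A hA (f 1) (f 2))
  have e : det ((A * Aᵀ).submatrix f f) = (n:ℤ)^3
      - (n:ℤ) * (((A * Aᵀ) (f 0) (f 1))^2 + ((A * Aᵀ) (f 0) (f 2))^2 + ((A * Aᵀ) (f 1) (f 2))^2)
      + 2 * ((A * Aᵀ) (f 0) (f 1)) * ((A * Aᵀ) (f 0) (f 2)) * ((A * Aᵀ) (f 1) (f 2)) := by
    rw [det_fin_three]
    simp only [submatrix_apply]
    rw [G_diag A hA, G_diag A hA, G_diag A hA,
      G_symm A (f 0) (f 1), G_symm A (f 0) (f 2), G_symm A (f 1) (f 2)]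
    ring
  have hprod1 : (0:ℤ) ≤ ((n:ℤ) - (A * Aᵀ) (f 0) (f 1)) * ((A * Aᵀ) (f 0) (f 2) + (A * Aᵀ) (f 1) (f 2))^2 :=
    mul_nonneg (by linarith) (sq_nonneg _)
  have hprod2 : (0:ℤ) ≤ ((n:ℤ) + (A * Aᵀ) (f 0) (f 1)) * ((A * Aᵀ) (f 0) (f 2) - (A * Aᵀ) (f 1) (f 2))^2 :=
    mul_nonneg (by linarith) (sq_nonneg _)
  have ineq : (n:ℤ) * (((A * Aᵀ) (f 0) (f 1))^2 + ((A * Aᵀ) (f 0) (f 2))^2 + ((A * Aᵀ) (f 1) (f 2))^2)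
      - 2 * ((A * Aᵀ) (f 0) (f 1)) * ((A * Aᵀ) (f 0) (f 2)) * ((A * Aᵀ) (f 1) (f 2)) ≥ 0 := by
    nlinarith [sq_nonneg ((A * Aᵀ) (f 0) (f 1)), hprod1, hprod2]
  refine ⟨by rw [e]; linarith, ?_, ?_⟩
  · intro h
    have heq : (n:ℤ) * (((A * Aᵀ) (f 0) (f 1))^2 + ((A * Aᵀ) (f 0) (f 2))^2 + ((A * Aᵀ) (f 1) (f 2))^2)
        - 2 * ((A * Aᵀ) (f 0) (f 1)) * ((A * Aᵀ) (f 0) (f 2)) * ((A * Aᵀ) (f 1) (f 2)) = 0 := by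
      rw [e] at h
      linarith
    have hpsq : ((A * Aᵀ) (f 0) (f 1))^2 ≤ 0 := by
      nlinarith [hprod1, hprod2]
    have hp0 : (A * Aᵀ) (f 0) (f 1) = 0 :=
      pow_eq_zero_iff (by norm_num) |>.mp (le_antisymm hpsq (sq_nonneg _))
    rw [hp0] at heq
    have h3q : (0:ℤ) ≤ ((n:ℤ) - 3) * ((A * Aᵀ) (f 0) (f 2))^2 :=
      mul_nonneg (by linarith) (sq_nonneg _)
    have h3r : (0:ℤ) ≤ ((n:ℤ) - 3) * ((A * Aᵀ) (f 1) (f 2))^2 :=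
      mul_nonneg (by linarith) (sq_nonneg _)
    have hqsq : ((A * Aᵀ) (f 0) (f 2))^2 ≤ 0 := by nlinarith [sq_nonneg ((A * Aᵀ) (f 1) (f 2))]
    have hq0 : (A * Aᵀ) (f 0) (f 2) = 0 :=
      pow_eq_zero_iff (by norm_num) |>.mp (le_antisymm hqsq (sq_nonneg _))
    rw [hq0] at heq
    have hrsq : ((A * Aᵀ) (f 1) (f 2))^2 ≤ 0 := by nlinarith [sq_nonneg ((A * Aᵀ) (f 1) (f 2))]
    have hr0 : (A * Aᵀ) (f 1) (f 2) = 0 :=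
      pow_eq_zero_iff (by norm_num) |>.mp (le_antisymm hrsq (sq_nonneg _))
    have hs1 : (A * Aᵀ) (f 1) (f 0) = 0 := (G_symm A (f 0) (f 1)).trans hp0
    have hs2 : (A * Aᵀ) (f 2) (f 0) = 0 := (G_symm A (f 0) (f 2)).trans hq0
    have hs3 : (A * Aᵀ) (f 2) (f 1) = 0 := (G_symm A (f 1) (f 2)).trans hr0
    intro a b hab
    fin_cases a <;> fin_cases b <;> simp_all
  · intro h
    rw [e, h 0 1 (by decide), h 0 2 (by decide), h 1 2 (by decide)]
    ring

-- G facts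


lemma main_aux (hmn : m ≤ n) (hm2 : 2 ≤ m)
    (A : Matrix (Fin n) (Fin n) ℤ) (hA : ∀ i j, A i j = 1 ∨ A i j = -1)
    (hdet_pm : ∀ M : Matrix (Fin m) (Fin m) ℤ, (∀ i j, M i j = 1 ∨ M i j = -1) →
      M.det = 0 ∨ M.det ^ 2 = 4 ^ (m - 1))
    (hdetG : ∀ f : {f : Fin m → Fin n // StrictMono f},
      det ((A * Aᵀ).submatrix f.1 f.1) ≤ (n : ℤ) ^ m ∧
        (det ((A * Aᵀ).submatrix f.1 f.1) = (n : ℤ) ^ m ↔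
          ∀ a b, a ≠ b → (A * Aᵀ) (f.1 a) (f.1 b) = 0)) :
    4 ^ (m - 1) *
        (Finset.univ.filter
          (fun p : {f : Fin m → Fin n // StrictMono f} × {g : Fin m → Fin n // StrictMono g} =>
            (A.submatrix p.1.1 p.2.1).det ≠ 0)).card = n ^ m * n.choose m ↔
      A * Aᵀ = (n : ℤ) • (1 : Matrix (Fin n) (Fin n) ℤ) := by
  classical
  have hY : (((Finset.univ.filter
          (fun p : {f : Fin m → Fin n // StrictMono f} × {g : Fin m → Fin n // StrictMono g} =>
            (A.submatrix p.1.1 p.2.1).det ≠ 0)).card : ℕ) : ℤ)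
      = ∑ p : {f : Fin m → Fin n // StrictMono f} × {g : Fin m → Fin n // StrictMono g},
          (if (A.submatrix p.1.1 p.2.1).det ≠ 0 then (1 : ℤ) else 0) := by
    rw [Finset.card_filter]
    push_cast
    rfl
  have key : ((4 ^ (m - 1) * (Finset.univ.filter
          (fun p : {f : Fin m → Fin n // StrictMono f} × {g : Fin m → Fin n // StrictMono g} =>
            (A.submatrix p.1.1 p.2.1).det ≠ 0)).card : ℕ) : ℤ)
      = ∑ f : {f : Fin m → Fin n // StrictMono f}, det ((A * Aᵀ).submatrix f.1 f.1) := by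
    push_cast [hY, Finset.mul_sum]
    rw [Fintype.sum_prod_type]
    refine Finset.sum_congr rfl fun f _ => ?_
    rw [← sum_det_sq A f.1]
    refine Finset.sum_congr rfl fun g _ => ?_
    rcases hdet_pm (A.submatrix f.1 g.1) (fun i j => hA _ _) with h|h
    · simp [h]
    · rw [if_pos, mul_one, h]
      intro hd
      rw [hd] at h
      have h4 : (0:ℤ) < 4 ^ (m-1) := by positivity
      simp at h
      omega
  rw [← Nat.cast_inj (R := ℤ), key]
  have hconst : ((n ^ m * n.choose m : ℕ) : ℤ)
      = ∑ _f : {f : Fin m → Fin n // StrictMono f}, (n : ℤ) ^ m := by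
    rw [Finset.sum_const, Finset.card_univ, card_strictMonoMaps, nsmul_eq_mul]
    push_cast
    ring
  rw [hconst, Finset.sum_eq_sum_iff_of_le (fun f _ => (hdetG f).1)]
  constructor
  · intro h
    have hz : ∀ i j : Fin n, i < j → (A * Aᵀ) i j = 0 := by
      intro i j hij
      have h2 : ({i, j} : Finset (Fin n)).card = 2 := Finset.card_pair (ne_of_lt hij)
      obtain ⟨t, hsub, htc⟩ := Finset.exists_superset_card_eq
        (le_trans (le_of_eq h2) hm2) (by rw [Fintype.card_fin]; exact hmn)
      have hf : StrictMono ⇑(t.orderEmbOfFin htc) := (t.orderEmbOfFin htc).strictMono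
      have hmi : i ∈ Set.range ⇑(t.orderEmbOfFin htc) := by
        rw [Finset.range_orderEmbOfFin]
        exact hsub (Finset.mem_insert_self i {j})
      have hmj : j ∈ Set.range ⇑(t.orderEmbOfFin htc) := by
        rw [Finset.range_orderEmbOfFin]
        exact hsub (Finset.mem_insert_of_mem (Finset.mem_singleton_self j))
      obtain ⟨a, ha⟩ := hmi
      obtain ⟨b, hb⟩ := hmj
      have hab : a ≠ b := by
        rintro rfl
        exact (ne_of_lt hij) (ha ▸ hb)
      have h0 := ((hdetG ⟨_, hf⟩).2).mp (h ⟨_, hf⟩ (Finset.mem_univ _)) a b hab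
      rw [← ha, ← hb]
      exact h0
    ext i j
    rcases lt_trichotomy i j with hij | rfl | hij
    · rw [hz i j hij, Matrix.smul_apply, Matrix.one_apply_ne (ne_of_lt hij)]
      simp
    · rw [G_diag A hA i, Matrix.smul_apply, Matrix.one_apply_eq]
      simp
    · rw [G_symm, hz j i hij, Matrix.smul_apply, Matrix.one_apply_ne (ne_of_gt hij)]
      simp
  · intro hH f _
    refine (hdetG f).2.mpr fun a b hab => ?_
    rw [hH, Matrix.smul_apply, Matrix.one_apply_ne (fun e => hab (f.2.injective e))]
    simp

/-- For an `n × n` `{±1}`-matrix `A` and `m ∈ {2,3}` with `n ≥ m`, equality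
holds in the bound `4^(m-1) * Y(m,A) ≤ n^m * C(n,m)` (where `Y(m,A)` counts the
nonzero minors of order `m`) if and only if `A` is a Hadamard matrix. -/
theorem nonzero_minors_count_eq_iff_hadamard (n m : ℕ)
    (hm : m = 2 ∨ m = 3) (hmn : m ≤ n)
    (A : Matrix (Fin n) (Fin n) ℤ) (hA : ∀ i j, A i j = 1 ∨ A i j = -1) :
    4 ^ (m - 1) *
        (Finset.univ.filter
          (fun p : {f : Fin m → Fin n // StrictMono f} × {g : Fin m → Fin n // StrictMono g} =>
            (A.submatrix p.1.1 p.2.1).det ≠ 0)).card = n ^ m * n.choose m ↔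
      A * Aᵀ = (n : ℤ) • (1 : Matrix (Fin n) (Fin n) ℤ) := by
  rcases hm with rfl | rfl
  · exact main_aux hmn (le_refl 2) A hA
      (fun M hM => by simpa using det2_pm M hM) (detG2 A hA)
  · exact main_aux hmn (by norm_num) A hA
      (fun M hM => by simpa using det3_pm M hM) (detG3 hmn A hA)
end

section
/- Let A be an n × n {+1,-1}-matrix and m an integer with 2 ≤ m ≤ n. If n > 2^(m-1), then A has a singular m × m submatrix, i.e., some choice of m rows and m columns of A yields an m × m matrix with determinant zero. -/
open Matrix

/-- Let `A` be an `n × n` `{±1}`-matrix and `2 ≤ m ≤ n`. If `n > 2^(m-1)`, then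
`A` has a singular `m × m` submatrix: some strictly monotone choice of `m` rows
and `m` columns yields a submatrix with determinant zero. -/
theorem exists_singular_submatrix_of_two_pow_lt (n m : ℕ)
    (hm : 2 ≤ m) (hmn : m ≤ n) (hn : 2 ^ (m - 1) < n)
    (A : Matrix (Fin n) (Fin n) ℤ) (hA : ∀ i j, A i j = 1 ∨ A i j = -1) :
    ∃ f g : Fin m → Fin n, StrictMono f ∧ StrictMono g ∧
      (A.submatrix f g).det = 0 := by
  classical
  -- column 0
  have h0m : (0 : ℕ) < m := by omega
  have h0n : (0 : ℕ) < n := by omega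
  set c0 : Fin n := ⟨0, h0n⟩ with hc0
  -- columns 1..m-1 as a map Fin (m-1) → Fin n
  have hcol : ∀ k : Fin (m - 1), k.val + 1 < n := fun k => by
    have := k.isLt; omega
  -- pigeonhole on sign-normalized rows
  set φ : Fin n → (Fin (m - 1) → Bool) :=
    fun i k => decide (A i c0 * A i ⟨k.val + 1, hcol k⟩ = 1) with hφ
  obtain ⟨i₁, i₂, hne, heq⟩ := Fintype.exists_ne_map_eq_of_card_lt φ (by
    simp [Fintype.card_fun]; omega)
  -- key: rows i₁ and i₂ are proportional on columns 0..m-1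
  set ε : ℤ := A i₁ c0 * A i₂ c0 with hε
  have key : ∀ j : Fin m, A i₁ ⟨j.val, lt_of_lt_of_le j.isLt hmn⟩ =
      ε * A i₂ ⟨j.val, lt_of_lt_of_le j.isLt hmn⟩ := by
    intro j
    rcases Nat.eq_zero_or_pos j.val with hj | hj
    · have : (⟨j.val, lt_of_lt_of_le j.isLt hmn⟩ : Fin n) = c0 := by
        simp [hc0, hj]
      rw [this, hε]
      rcases hA i₁ c0 with h1 | h1 <;> rcases hA i₂ c0 with h2 | h2 <;>
        rw [h1, h2] <;> ring
    · set k : Fin (m - 1) := ⟨j.val - 1, by have := j.isLt; omega⟩ with hk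
      have hcoleq : (⟨j.val, lt_of_lt_of_le j.isLt hmn⟩ : Fin n) =
          ⟨k.val + 1, hcol k⟩ := by
        simp [hk]; omega
      have hφeq : φ i₁ k = φ i₂ k := by rw [heq]
      simp only [hφ, decide_eq_decide] at hφeq
      rw [hcoleq]
      set c : Fin n := ⟨k.val + 1, hcol k⟩
      rcases hA i₁ c0 with h1 | h1 <;> rcases hA i₂ c0 with h2 | h2 <;>
        rcases hA i₁ c with h3 | h3 <;> rcases hA i₂ c with h4 | h4 <;>
        simp [h1, h2, h3, h4, hε] at hφeq ⊢
  -- choose m rows containing i₁ and i₂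
  obtain ⟨S, hsub, _, hcard⟩ := Finset.exists_subsuperset_card_eq (n := m)
    (Finset.subset_univ {i₁, i₂}) (by
      rw [Finset.card_insert_of_notMem (by simpa using hne), Finset.card_singleton]
      omega) (by simpa using hmn)
  set f : Fin m → Fin n := fun k => (S.orderIsoOfFin hcard k : Fin n) with hf
  have hfmono : StrictMono f := fun a b hab => by
    simpa [hf] using (S.orderIsoOfFin hcard).strictMono hab
  set g : Fin m → Fin n := fun j => ⟨j.val, lt_of_lt_of_le j.isLt hmn⟩ with hg
  have hgmono : StrictMono g := fun a b hab => hab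
  -- indices in Fin m mapping to i₁, i₂
  have hi₁ : i₁ ∈ S := hsub (by simp)
  have hi₂ : i₂ ∈ S := hsub (by simp)
  obtain ⟨a, ha⟩ := (S.orderIsoOfFin hcard).surjective ⟨i₁, hi₁⟩
  obtain ⟨b, hb⟩ := (S.orderIsoOfFin hcard).surjective ⟨i₂, hi₂⟩
  have hfa : f a = i₁ := by simp only [hf]; rw [ha]
  have hfb : f b = i₂ := by simp only [hf]; rw [hb]
  have hab : a ≠ b := by
    intro h; apply hne; rw [← hfa, ← hfb, h]
  refine ⟨f, g, hfmono, hgmono, ?_⟩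
  set M := A.submatrix f g with hM
  have hrow : M a = ε • M b := by
    funext j
    simp only [hM, Matrix.submatrix_apply, hfa, hfb, hg, Pi.smul_apply, smul_eq_mul]
    exact key j
  have : M = M.updateRow a (ε • M b) := by rw [← hrow, Matrix.updateRow_eq_self]
  rw [this, Matrix.det_updateRow_smul]
  have : (M.updateRow a (M b)).det = 0 := by
    apply Matrix.det_zero_of_row_eq hab
    simp [Matrix.updateRow_apply, hab, Ne.symm hab]
  rw [this, mul_zero]
end

section
/- Let H be a Hadamard matrix of order n ≥ 2. Then the number Z(2,H) of 2 × 2 submatrices of H (over all choices of 2 rows and 2 columns) with determinant zero equals n²·(n-1)·(n-2)/8. -/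
open Matrix Finset

-- halving lemma
lemma half_count {n : ℕ} (s : Fin n → ℤ) :
    2 * (Finset.univ.filter fun q : Fin n × Fin n => q.1 < q.2 ∧ s q.1 = s q.2).card + n
      = (Finset.univ.filter fun q : Fin n × Fin n => s q.1 = s q.2).card := by
  classical
  have h1 : (univ.filter fun q : Fin n × Fin n => s q.1 = s q.2)
      = ((univ.filter fun q : Fin n × Fin n => q.1 < q.2 ∧ s q.1 = s q.2)
        ∪ (univ.filter fun q : Fin n × Fin n => q.2 < q.1 ∧ s q.1 = s q.2))
        ∪ (univ.filter fun q : Fin n × Fin n => q.1 = q.2) := by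
    ext q
    simp only [mem_filter, mem_union, mem_univ, true_and]
    constructor
    · intro h; rcases lt_trichotomy q.1 q.2 with h'|h'|h' <;> tauto
    · rintro ((⟨_, h⟩|⟨_, h⟩)|h)
      · exact h
      · exact h
      · rw [h]
  have hdisj1 : Disjoint (univ.filter fun q : Fin n × Fin n => q.1 < q.2 ∧ s q.1 = s q.2)
      (univ.filter fun q : Fin n × Fin n => q.2 < q.1 ∧ s q.1 = s q.2) := by
    rw [Finset.disjoint_left]
    intro q hq hq'
    simp only [mem_filter] at hq hq'
    exact absurd hq'.2.1 (not_lt.mpr hq.2.1.le)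
  have hdisj2 : Disjoint ((univ.filter fun q : Fin n × Fin n => q.1 < q.2 ∧ s q.1 = s q.2)
        ∪ (univ.filter fun q : Fin n × Fin n => q.2 < q.1 ∧ s q.1 = s q.2))
      (univ.filter fun q : Fin n × Fin n => q.1 = q.2) := by
    rw [Finset.disjoint_left]
    intro q hq hq'
    simp only [mem_filter, mem_union] at hq hq'
    rcases hq with ⟨_, h, _⟩|⟨_, h, _⟩ <;> simp [hq'.2] at h
  have hGL : (univ.filter fun q : Fin n × Fin n => q.2 < q.1 ∧ s q.1 = s q.2).card
      = (univ.filter fun q : Fin n × Fin n => q.1 < q.2 ∧ s q.1 = s q.2).card := by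
    apply Finset.card_bij (fun q _ => q.swap)
    · intro q hq
      simp only [mem_filter, mem_univ, true_and] at hq ⊢
      exact ⟨hq.1, hq.2.symm⟩
    · intro q _ q' _ h
      exact Prod.swap_injective h
    · intro q hq
      simp only [mem_filter, mem_univ, true_and] at hq
      exact ⟨q.swap, by simp [mem_filter, hq.1, hq.2.symm], by simp⟩
  have hD : (univ.filter fun q : Fin n × Fin n => q.1 = q.2).card = n := by
    have : (univ.filter fun q : Fin n × Fin n => q.1 = q.2)
        = Finset.univ.image (fun a : Fin n => (a, a)) := by
      ext q
      simp only [mem_filter, mem_univ, true_and, mem_image]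
      constructor
      · intro h; exact ⟨q.1, Prod.ext rfl h⟩
      · rintro ⟨a, rfl⟩; rfl
    rw [this, Finset.card_image_of_injective _ (fun a b h => by simpa using h)]
    simp
  rw [h1, Finset.card_union_of_disjoint hdisj2, Finset.card_union_of_disjoint hdisj1, hGL, hD]
  ring

lemma total_count {n : ℕ} (s : Fin n → ℤ) (hs : ∀ k, s k = 1 ∨ s k = -1)
    (h0 : ∑ k, s k = 0) :
    2 * (Finset.univ.filter fun q : Fin n × Fin n => s q.1 = s q.2).card = n * n := by
  classical
  set A := Finset.univ.filter fun k : Fin n => s k = 1 with hA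
  set B := Finset.univ.filter fun k : Fin n => s k = -1 with hB
  have hcardsum : A.card + B.card = n := by
    rw [← Finset.card_union_of_disjoint]
    · have : A ∪ B = univ := by
        ext k; simp only [mem_union, mem_filter, mem_univ, true_and, hA, hB]
        simpa using hs k
      rw [this, Finset.card_univ, Fintype.card_fin]
    · rw [Finset.disjoint_left]
      intro k hk hk'
      simp only [hA, hB, mem_filter] at hk hk'
      rw [hk.2] at hk'; norm_num at hk'
  have hab : A.card = B.card := by
    have h1 : ∑ k, s k = (A.card : ℤ) - B.card := by
      have hU : (univ : Finset (Fin n)) = A ∪ B := by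
        ext k; simp only [mem_union, mem_filter, mem_univ, true_and, hA, hB]
        simpa using (hs k)
      have hd : Disjoint A B := by
        rw [Finset.disjoint_left]
        intro k hk hk'
        simp only [hA, hB, mem_filter] at hk hk'
        rw [hk.2] at hk'; norm_num at hk'
      rw [hU, Finset.sum_union hd]
      have h2 : ∑ k ∈ A, s k = A.card := by
        rw [Finset.sum_congr rfl (fun k hk => by simp only [hA, mem_filter] at hk; exact hk.2)]
        simp
      have h3 : ∑ k ∈ B, s k = -(B.card : ℤ) := by
        rw [Finset.sum_congr rfl (fun k hk => by simp only [hB, mem_filter] at hk; exact hk.2)]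
        simp
      rw [h2, h3]; ring
    rw [h0] at h1
    have := sub_eq_zero.mp h1.symm
    exact_mod_cast this
  -- fibers
  have hfiber : ∀ k : Fin n, (Finset.univ.filter fun l : Fin n => s k = s l).card = A.card := by
    intro k
    rcases hs k with h | h
    · have : (Finset.univ.filter fun l : Fin n => s k = s l) = A := by
        ext l; simp [hA, h, eq_comm]
      rw [this]
    · have : (Finset.univ.filter fun l : Fin n => s k = s l) = B := by
        ext l; simp [hB, h, eq_comm]
      rw [this, ← hab]
  have hT : (Finset.univ.filter fun q : Fin n × Fin n => s q.1 = s q.2).card = n * A.card := by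
    rw [Finset.card_filter]
    rw [Fintype.sum_prod_type]
    calc ∑ k : Fin n, ∑ l : Fin n, (if s k = s l then 1 else 0)
        = ∑ k : Fin n, (Finset.univ.filter fun l : Fin n => s k = s l).card := by
          refine Finset.sum_congr rfl fun k _ => ?_
          rw [Finset.card_filter]
      _ = ∑ _k : Fin n, A.card := Finset.sum_congr rfl fun k _ => hfiber k
      _ = n * A.card := by simp [mul_comm]
  rw [hT]
  have h2a : 2 * A.card = n := by omega
  calc 2 * (n * A.card) = n * (2 * A.card) := by ring
    _ = n * n := by rw [h2a]

lemma strictMono_pair {n : ℕ} {i j : Fin n} (h : i < j) : StrictMono ![i, j] := by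
  intro a b hab
  fin_cases a <;> fin_cases b <;> simp_all

lemma det_cond_iff {a b c d : ℤ} (ha : a = 1 ∨ a = -1) (hb : b = 1 ∨ b = -1)
    (hc : c = 1 ∨ c = -1) (hd : d = 1 ∨ d = -1) :
    a * d - b * c = 0 ↔ a * c = b * d := by
  rcases ha with rfl | rfl <;> rcases hb with rfl | rfl <;> rcases hc with rfl | rfl <;>
    rcases hd with rfl | rfl <;> norm_num

lemma card_eq_pairs (n : ℕ) (H : Matrix (Fin n) (Fin n) ℤ) :
    (Finset.univ.filter
        (fun p : {f : Fin 2 → Fin n // StrictMono f} × {g : Fin 2 → Fin n // StrictMono g} =>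
          (H.submatrix p.1.1 p.2.1).det = 0)).card
    = (Finset.univ.filter
        (fun z : (Fin n × Fin n) × (Fin n × Fin n) =>
          (z.1.1 < z.1.2 ∧ z.2.1 < z.2.2) ∧
            H z.1.1 z.2.1 * H z.1.2 z.2.2 - H z.1.1 z.2.2 * H z.1.2 z.2.1 = 0)).card := by
  apply Finset.card_bij (fun p _ => ((p.1.1 0, p.1.1 1), (p.2.1 0, p.2.1 1)))
  · rintro ⟨⟨f, hf⟩, ⟨g, hg⟩⟩ hp
    simp only [mem_filter, mem_univ, true_and] at hp ⊢
    refine ⟨⟨hf (by decide), hg (by decide)⟩, ?_⟩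
    rw [Matrix.det_fin_two] at hp
    simpa using hp
  · rintro ⟨⟨f, hf⟩, ⟨g, hg⟩⟩ _ ⟨⟨f', hf'⟩, ⟨g', hg'⟩⟩ _ h
    simp only [Prod.mk.injEq] at h
    obtain ⟨⟨h1, h2⟩, h3, h4⟩ := h
    simp only [Prod.mk.injEq, Subtype.mk.injEq]
    constructor <;> · funext a; fin_cases a <;> assumption
  · rintro ⟨⟨i, j⟩, ⟨k, l⟩⟩ hz
    simp only [mem_filter, mem_univ, true_and] at hz
    obtain ⟨⟨hij, hkl⟩, hdet⟩ := hz
    refine ⟨(⟨![i, j], strictMono_pair hij⟩, ⟨![k, l], strictMono_pair hkl⟩), ?_, ?_⟩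
    · simp only [mem_filter, mem_univ, true_and, Matrix.det_fin_two]
      simpa using hdet
    · simp

/-- For a Hadamard matrix `H` of order `n ≥ 2`, the number `Z(2,H)` of `2 × 2`
submatrices with zero determinant (over all pairs of strictly monotone index
maps `Fin 2 → Fin n`) equals `n^2 (n-1) (n-2) / 8`. -/
theorem zero_minors_order_two_hadamard (n : ℕ) (hn : 2 ≤ n)
    (H : Matrix (Fin n) (Fin n) ℤ) (hH1 : ∀ i j, H i j = 1 ∨ H i j = -1)
    (hH : H * Hᵀ = (n : ℤ) • (1 : Matrix (Fin n) (Fin n) ℤ)) :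
    ((Finset.univ.filter
        (fun p : {f : Fin 2 → Fin n // StrictMono f} × {g : Fin 2 → Fin n // StrictMono g} =>
          (H.submatrix p.1.1 p.2.1).det = 0)).card : ℚ) =
      (n : ℚ) ^ 2 * ((n : ℚ) - 1) * ((n : ℚ) - 2) / 8 := by
  classical
  -- orthogonality of distinct rows
  have horth : ∀ i j : Fin n, i ≠ j → ∑ k, H i k * H j k = 0 := by
    intro i j hij
    have := congrFun (congrFun hH i) j
    rw [Matrix.mul_apply] at this
    simp only [Matrix.transpose_apply, Matrix.smul_apply, Matrix.one_apply_ne hij,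
      smul_zero] at this
    exact this
  -- inner count for a fixed pair of distinct rows
  have hinner : ∀ i j : Fin n, i ≠ j →
      4 * (Finset.univ.filter fun q : Fin n × Fin n => q.1 < q.2 ∧
        H i q.1 * H j q.2 - H i q.2 * H j q.1 = 0).card + 2 * n = n * n := by
    intro i j hij
    set s : Fin n → ℤ := fun k => H i k * H j k with hsdef
    have hs : ∀ k, s k = 1 ∨ s k = -1 := by
      intro k
      rcases hH1 i k with h | h <;> rcases hH1 j k with h' | h' <;>
        simp [hsdef, h, h']
    have h0 : ∑ k, s k = 0 := horth i j hij
    have hfe : (Finset.univ.filter fun q : Fin n × Fin n => q.1 < q.2 ∧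
        H i q.1 * H j q.2 - H i q.2 * H j q.1 = 0)
        = (Finset.univ.filter fun q : Fin n × Fin n => q.1 < q.2 ∧ s q.1 = s q.2) := by
      apply Finset.filter_congr
      intro q _
      have := det_cond_iff (hH1 i q.1) (hH1 i q.2) (hH1 j q.1) (hH1 j q.2)
      constructor
      · rintro ⟨h1, h2⟩; exact ⟨h1, this.mp h2⟩
      · rintro ⟨h1, h2⟩; exact ⟨h1, this.mpr h2⟩
    rw [hfe]
    have h1 := half_count s
    have h2 := total_count s hs h0
    omega
  -- outer pair count
  have houter : 2 * (Finset.univ.filter fun p : Fin n × Fin n => p.1 < p.2).card + n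
      = n * n := by
    have h1 := half_count (fun _ : Fin n => (0 : ℤ))
    have he1 : (Finset.univ.filter fun q : Fin n × Fin n => q.1 < q.2 ∧ (0 : ℤ) = 0)
        = (Finset.univ.filter fun p : Fin n × Fin n => p.1 < p.2) := by
      apply Finset.filter_congr; intro q _; simp
    have he2 : (Finset.univ.filter fun _q : Fin n × Fin n => (0 : ℤ) = 0)
        = (Finset.univ : Finset (Fin n × Fin n)) := by
      apply Finset.filter_true_of_mem; intro q _; rfl
    rw [he1, he2] at h1
    simpa using h1
  -- the main count
  rw [card_eq_pairs n H]
  set N := (Finset.univ.filter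
      (fun z : (Fin n × Fin n) × (Fin n × Fin n) =>
        (z.1.1 < z.1.2 ∧ z.2.1 < z.2.2) ∧
          H z.1.1 z.2.1 * H z.1.2 z.2.2 - H z.1.1 z.2.2 * H z.1.2 z.2.1 = 0)).card with hN
  have hNsum : N = ∑ p : Fin n × Fin n,
      (if p.1 < p.2 then (Finset.univ.filter fun q : Fin n × Fin n => q.1 < q.2 ∧
        H p.1 q.1 * H p.2 q.2 - H p.1 q.2 * H p.2 q.1 = 0).card else 0) := by
    rw [hN, Finset.card_filter, Fintype.sum_prod_type]
    refine Finset.sum_congr rfl fun p _ => ?_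
    by_cases hp : p.1 < p.2
    · rw [if_pos hp, Finset.card_filter]
      refine Finset.sum_congr rfl fun q _ => ?_
      by_cases hq : q.1 < q.2 ∧ H p.1 q.1 * H p.2 q.2 - H p.1 q.2 * H p.2 q.1 = 0
      · rw [if_pos ⟨⟨hp, hq.1⟩, hq.2⟩, if_pos hq]
      · rw [if_neg, if_neg hq]
        rintro ⟨⟨_, h1⟩, h2⟩; exact hq ⟨h1, h2⟩
    · rw [if_neg hp]
      refine Finset.sum_eq_zero fun q _ => ?_
      rw [if_neg]; rintro ⟨⟨h1, _⟩, _⟩; exact hp h1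
  have h4N : 4 * N + 2 * n * ((Finset.univ.filter
      fun p : Fin n × Fin n => p.1 < p.2).card) =
      n * n * ((Finset.univ.filter fun p : Fin n × Fin n => p.1 < p.2).card) := by
    rw [hNsum, Finset.mul_sum]
    simp only [mul_ite, mul_zero]
    rw [← Finset.sum_filter]
    have hconst : ∑ p ∈ (Finset.univ.filter fun p : Fin n × Fin n => p.1 < p.2),
        (4 * (Finset.univ.filter fun q : Fin n × Fin n => q.1 < q.2 ∧
          H p.1 q.1 * H p.2 q.2 - H p.1 q.2 * H p.2 q.1 = 0).card + 2 * n)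
        = ∑ _p ∈ (Finset.univ.filter fun p : Fin n × Fin n => p.1 < p.2), n * n := by
      refine Finset.sum_congr rfl fun p hp => ?_
      simp only [mem_filter] at hp
      exact hinner p.1 p.2 (ne_of_lt hp.2)
    rw [Finset.sum_add_distrib, Finset.sum_const, Finset.sum_const, smul_eq_mul,
      smul_eq_mul] at hconst
    rw [mul_comm (2 * n), mul_comm (n * n)]
    exact hconst
  -- final arithmetic over ℚ
  set P := (Finset.univ.filter fun p : Fin n × Fin n => p.1 < p.2).card with hP
  have hq1 : (4 : ℚ) * N + 2 * n * P = n * n * P := by exact_mod_cast h4N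
  have hq2 : (2 : ℚ) * P + n = n * n := by exact_mod_cast houter
  rw [eq_div_iff (by norm_num : (8 : ℚ) ≠ 0)]
  linear_combination 2 * hq1 + ((n : ℚ) * n - 2 * n) * hq2
end

section
/- Let m ≤ n be positive integers. The sum of det(B·Bᵀ) over all 2^(m·n) matrices B ∈ {+1,-1}^(m×n) equals m! · C(n,m) · 2^(m·n). Equivalently, if B is an m × n {±1}-matrix chosen uniformly at random, then E(det(B·Bᵀ)) = m!·C(n,m). -/
/-!
Expanding `det (B Bᵀ) = ∑_σ sgn σ ∏_i ∑_k B_{σ i, k} B_{i, k}` writes it as a sum, over all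
permutations `σ` and all maps `f` from rows to columns, of `sgn σ ∏_i B_{σ i, f i} B_{i, f i}`.
The entries of `B` are independent uniform signs and distinct entries are uncorrelated, so
averaging over `B` kills every term except those with `f ∘ σ = f`, which contribute `sgn σ`.
For fixed `f`, the signed count of such `σ` is the determinant of the matrix `[f i = f j]`:
it is `1` when `f` is injective (the identity matrix) and `0` otherwise (two equal rows).
There are `m! · C(n, m)` injective `f`.
-/

open Matrix Finset Function Equiv

theorem sum_sign_mul_sign {ι : Type*} [Fintype ι] [DecidableEq ι] (j k : ι) :
    ∑ r : ι → Bool, (if r j then (1 : ℤ) else -1) * (if r k then 1 else -1) =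
      if j = k then 2 ^ Fintype.card ι else 0 := by
  split_ifs with hjk
  · subst hjk
    have sign_sq : ∀ r : ι → Bool, (if r j then (1 : ℤ) else -1) * (if r j then 1 else -1) = 1 :=
      fun r => by cases r j <;> simp
    simp [sign_sq]
  · -- flipping the sign at `j` negates the summand
    refine sum_ninvolution (fun r => update r j (!r j)) (fun r => ?_)
      (fun r _ h => by simpa using congrFun h j) (fun _ => mem_univ _) (fun r => by simp)
    simp only [update_self, update_of_ne (Ne.symm hjk)]
    cases r j <;> cases r k <;> simp

section

variable {m n : Type*} [Fintype m] [DecidableEq m]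

theorem Matrix.det_mul_transpose_eq_sum {R : Type*} [CommRing R] [Fintype n]
    (A : Matrix m n R) :
    (A * Aᵀ).det =
      ∑ σ : Perm m, ∑ f : m → n, (Perm.sign σ : R) * ∏ i, A (σ i) (f i) * A i (f i) := by
  simp_rw [det_apply', ← mul_sum, mul_apply, transpose_apply, Fintype.prod_sum]

def signMatrix (ε : m → n → Bool) : Matrix m n ℤ :=
  of fun i j => if ε i j then 1 else -1

variable [DecidableEq n]

theorem Matrix.det_of_apply_eq_apply {R : Type*} [CommRing R] (f : m → n) :
    (of fun i j => if f i = f j then (1 : R) else 0).det = if Injective f then 1 else 0 := by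
  split_ifs with hf
  · convert det_one (R := R) (n := m)
    ext i j
    simp [one_apply, hf.eq_iff]
  · obtain ⟨i, j, hij, hne⟩ := not_injective_iff.mp hf
    exact det_zero_of_row_eq hne (by ext k; simp [hij])

theorem sum_sign_of_comp_eq (f : m → n) :
    ∑ σ : Perm m, (if f ∘ σ = f then (Perm.sign σ : ℤ) else 0) = if Injective f then 1 else 0 := by
  rw [← det_of_apply_eq_apply, det_apply']
  simp_rw [of_apply, Fintype.prod_boole, mul_ite, mul_one, mul_zero, Int.cast_id, funext_iff,
    Function.comp_apply]

variable [Fintype n]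

theorem sum_prod_signMatrix_mul_signMatrix (f g : m → n) :
    ∑ ε : m → n → Bool, ∏ i, signMatrix ε i (f i) * signMatrix ε i (g i) =
      if f = g then 2 ^ (Fintype.card n * Fintype.card m) else 0 := by
  simp_rw [signMatrix, of_apply]
  rw [← Fintype.prod_sum (fun i (r : n → Bool) =>
    (if r (f i) then (1 : ℤ) else -1) * (if r (g i) then 1 else -1))]
  simp_rw [sum_sign_mul_sign, Fintype.prod_ite_zero, prod_const, card_univ, ← pow_mul, funext_iff]

theorem sum_prod_signMatrix_perm (σ : Perm m) (f : m → n) :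
    ∑ ε : m → n → Bool, ∏ i, signMatrix ε (σ i) (f i) * signMatrix ε i (f i) =
      if f ∘ σ = f then 2 ^ (Fintype.card n * Fintype.card m) else 0 := by
  have reindex : ∀ ε : m → n → Bool, ∏ i, signMatrix ε (σ i) (f i) * signMatrix ε i (f i) =
      ∏ i, signMatrix ε i ((f ∘ σ.symm) i) * signMatrix ε i (f i) := fun ε => by
    rw [prod_mul_distrib, prod_mul_distrib]
    conv_rhs => rw [← Equiv.prod_comp σ]
    simp
  simp_rw [reindex, sum_prod_signMatrix_mul_signMatrix, comp_symm_eq, eq_comm]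

theorem sum_boole_injective :
    ∑ f : m → n, (if Injective f then (1 : ℤ) else 0) =
      (Fintype.card n).descFactorial (Fintype.card m) := by
  rw [sum_boole, ← Fintype.card_embedding_eq, ← Fintype.card_subtype]
  exact congrArg _ (Fintype.card_congr (Equiv.subtypeInjectiveEquivEmbedding m n))

end

theorem sum_det_gram_random_pm_one_general (m n : ℕ) :
    ∑ ε : Fin m → Fin n → Bool,
        ((Matrix.of fun i j => if ε i j then (1 : ℤ) else -1) *
          (Matrix.of fun i j => if ε i j then (1 : ℤ) else -1)ᵀ).det =
      (m.factorial : ℤ) * (n.choose m : ℤ) * 2 ^ (m * n) := by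
  calc ∑ ε : Fin m → Fin n → Bool, (signMatrix ε * (signMatrix ε)ᵀ).det
      = ∑ f : Fin m → Fin n, ∑ σ : Perm (Fin m),
          (Perm.sign σ : ℤ) * ∑ ε : Fin m → Fin n → Bool,
            ∏ i, signMatrix ε (σ i) (f i) * signMatrix ε i (f i) := by
        simp_rw [det_mul_transpose_eq_sum, Int.cast_id, mul_sum]
        rw [Finset.sum_comm]
        exact (sum_congr rfl fun σ _ => sum_comm).trans sum_comm
    _ = ∑ f : Fin m → Fin n, (if Injective f then (1 : ℤ) else 0) * 2 ^ (m * n) := by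
        simp_rw [sum_prod_signMatrix_perm, mul_ite, mul_zero, ← ite_zero_mul, ← sum_mul,
          sum_sign_of_comp_eq, Fintype.card_fin, mul_comm n]
    _ = (m.factorial : ℤ) * (n.choose m : ℤ) * 2 ^ (m * n) := by
        rw [← sum_mul, sum_boole_injective, Fintype.card_fin, Fintype.card_fin,
          Nat.descFactorial_eq_factorial_mul_choose]
        push_cast
        ring

/-- For `1 ≤ m ≤ n`, the sum of `det (B * Bᵀ)` over all `2^(m*n)` matrices
`B ∈ {±1}^(m×n)` (encoded by sign patterns `ε : Fin m → Fin n → Bool`) equals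
`m! * C(n,m) * 2^(m*n)`; i.e. `E(det (B * Bᵀ)) = m! * C(n,m)` for a uniformly
random `m × n` `{±1}`-matrix `B`. -/
theorem sum_det_gram_random_pm_one (m n : ℕ) (hm : 1 ≤ m) (hmn : m ≤ n) :
    ∑ ε : Fin m → Fin n → Bool,
        ((Matrix.of fun i j => if ε i j then (1 : ℤ) else -1) *
          (Matrix.of fun i j => if ε i j then (1 : ℤ) else -1)ᵀ).det =
      (m.factorial : ℤ) * (n.choose m : ℤ) * 2 ^ (m * n) :=
  sum_det_gram_random_pm_one_general m n
end

section
/- For every positive integer m, the sum of det(A)² over all 2^(m²) matrices A ∈ {+1,-1}^(m×m) equals m! · 2^(m²). Equivalently, if A is an m × m {±1}-matrix chosen uniformly at random, then E(det(A)²) = m! (Turán's theorem). -/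
open Matrix

private def sgn : Bool → ℤ := fun b => if b then 1 else -1

private lemma sgn_mul_self (b : Bool) : sgn b * sgn b = 1 := by
  cases b <;> simp [sgn]

private lemma sum_sgn : ∑ b : Bool, sgn b = 0 := by simp [sgn]

/-- Single-row expectation: `∑_{r : Fin m → Bool} sgn(r a) * sgn(r b)`
is `2^m` if `a = b` and `0` otherwise. -/
private lemma row_sum (m : ℕ) (a b : Fin m) :
    ∑ r : Fin m → Bool, sgn (r a) * sgn (r b) =
      if a = b then (2 : ℤ) ^ m else 0 := by
  have h₁ : ∀ r : Fin m → Bool,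
      sgn (r a) * sgn (r b) =
        ∏ j, ((if j = a then sgn (r j) else 1) * (if j = b then sgn (r j) else 1)) := by
    intro r
    rw [Finset.prod_mul_distrib, Finset.prod_ite_eq', Finset.prod_ite_eq']
    simp
  simp_rw [h₁]
  rw [← Fintype.prod_sum (fun j c => (if j = a then sgn c else 1) * (if j = b then sgn c else 1))]
  by_cases hab : a = b
  · subst hab
    simp only [if_pos rfl]
    have : ∀ j : Fin m,
        (∑ c : Bool, (if j = a then sgn c else 1) * (if j = a then sgn c else 1)) = 2 := by
      intro j
      by_cases hj : j = a
      · subst hj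
        have h2 : (∑ c : Bool, (if j = j then sgn c else 1) * if j = j then sgn c else 1) =
            ∑ _c : Bool, (1 : ℤ) := by
          refine Finset.sum_congr rfl fun c _ => ?_
          rw [if_pos rfl, sgn_mul_self]
        rw [h2]
        simp
      · simp [hj]
    rw [Finset.prod_congr rfl fun j _ => this j]
    simp
  · rw [if_neg hab]
    apply Finset.prod_eq_zero (Finset.mem_univ a)
    have : ∀ c : Bool, (if a = a then sgn c else 1) * (if a = b then sgn c else 1) = sgn c := by
      intro c; simp [hab]
    rw [Finset.sum_congr rfl fun c _ => this c, sum_sgn]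

/-- Turán's theorem: for `m ≥ 1`, the sum of `det(A)^2` over all `2^(m^2)`
matrices `A ∈ {±1}^(m×m)` (encoded by sign patterns `ε : Fin m → Fin m → Bool`)
equals `m! * 2^(m^2)`; i.e. `E(det(A)^2) = m!` for a uniformly random `m × m`
`{±1}`-matrix `A`. -/
theorem turan_sum_det_sq_pm_one (m : ℕ) (hm : 1 ≤ m) :
    ∑ ε : Fin m → Fin m → Bool,
        (Matrix.of fun i j => if ε i j then (1 : ℤ) else -1).det ^ 2 =
      (m.factorial : ℤ) * 2 ^ (m ^ 2) := by
  classical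
  have hdet : ∀ ε : Fin m → Fin m → Bool,
      (Matrix.of fun i j => if ε i j then (1 : ℤ) else -1).det =
        ∑ σ : Equiv.Perm (Fin m), (Equiv.Perm.sign σ : ℤ) * ∏ i, sgn (ε (σ i) i) := by
    intro ε
    rw [Matrix.det_apply]
    refine Finset.sum_congr rfl fun σ _ => ?_
    rw [Units.smul_def, zsmul_eq_mul]
    rfl
  calc
    ∑ ε : Fin m → Fin m → Bool,
        (Matrix.of fun i j => if ε i j then (1 : ℤ) else -1).det ^ 2
      = ∑ ε : Fin m → Fin m → Bool, ∑ σ : Equiv.Perm (Fin m), ∑ τ : Equiv.Perm (Fin m),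
          ((Equiv.Perm.sign σ : ℤ) * (Equiv.Perm.sign τ : ℤ)) *
            ∏ k, (sgn (ε k (σ⁻¹ k)) * sgn (ε k (τ⁻¹ k))) := by
        refine Finset.sum_congr rfl fun ε _ => ?_
        rw [hdet ε, sq, Finset.sum_mul_sum]
        refine Finset.sum_congr rfl fun σ _ => Finset.sum_congr rfl fun τ _ => ?_
        rw [Finset.prod_mul_distrib]
        have hσ : ∏ k, sgn (ε k (σ⁻¹ k)) = ∏ i, sgn (ε (σ i) i) := by
          rw [← Equiv.prod_comp σ fun k => sgn (ε k (σ⁻¹ k))]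
          simp
        have hτ : ∏ k, sgn (ε k (τ⁻¹ k)) = ∏ i, sgn (ε (τ i) i) := by
          rw [← Equiv.prod_comp τ fun k => sgn (ε k (τ⁻¹ k))]
          simp
        rw [hσ, hτ]; ring
    _ = ∑ σ : Equiv.Perm (Fin m), ∑ τ : Equiv.Perm (Fin m),
          ((Equiv.Perm.sign σ : ℤ) * (Equiv.Perm.sign τ : ℤ)) *
            ∑ ε : Fin m → Fin m → Bool,
              ∏ k, (sgn (ε k (σ⁻¹ k)) * sgn (ε k (τ⁻¹ k))) := by
        rw [Finset.sum_comm]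
        refine Finset.sum_congr rfl fun σ _ => ?_
        rw [Finset.sum_comm]
        refine Finset.sum_congr rfl fun τ _ => ?_
        rw [Finset.mul_sum]
    _ = ∑ σ : Equiv.Perm (Fin m), ∑ τ : Equiv.Perm (Fin m),
          ((Equiv.Perm.sign σ : ℤ) * (Equiv.Perm.sign τ : ℤ)) *
            (if σ = τ then (2 : ℤ) ^ (m ^ 2) else 0) := by
        refine Finset.sum_congr rfl fun σ _ => Finset.sum_congr rfl fun τ _ => ?_
        congr 1
        rw [← Fintype.prod_sum (fun k (r : Fin m → Bool) => sgn (r (σ⁻¹ k)) * sgn (r (τ⁻¹ k)))]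
        rw [Finset.prod_congr rfl fun k _ => row_sum m (σ⁻¹ k) (τ⁻¹ k)]
        by_cases hst : σ = τ
        · subst hst
          simp [pow_mul', sq]
        · rw [if_neg hst]
          obtain ⟨k, hk⟩ : ∃ k, σ⁻¹ k ≠ τ⁻¹ k := by
            by_contra h
            push_neg at h
            exact hst (by
              have : σ⁻¹ = τ⁻¹ := Equiv.ext h
              simpa using congrArg Inv.inv this)
          exact Finset.prod_eq_zero (Finset.mem_univ k) (if_neg hk)
    _ = (m.factorial : ℤ) * 2 ^ (m ^ 2) := by
        simp only [mul_ite, mul_zero, Finset.sum_ite_eq, Finset.mem_univ, if_true]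
        have h : ∀ σ : Equiv.Perm (Fin m),
            ((Equiv.Perm.sign σ : ℤ) * (Equiv.Perm.sign σ : ℤ)) * 2 ^ (m ^ 2) = 2 ^ (m ^ 2) := by
          intro σ
          rcases Int.units_eq_one_or (Equiv.Perm.sign σ) with h | h <;> simp [h]
        rw [Finset.sum_congr rfl fun σ _ => h σ, Finset.sum_const, Finset.card_univ,
          Fintype.card_perm, Fintype.card_fin, nsmul_eq_mul]
end

section
/- Let H be a Hadamard matrix of order n and let m be an integer with 0 ≤ m ≤ n. Then Z(m,H) = Z(n−m,H), where Z(k,H) denotes the number of k × k submatrices of H (over all choices of k rows and k columns) with determinant zero. -/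
open Matrix

section Aux

/-- Jacobi-style key lemma over ℚ: for a matrix `H` with `H Hᵀ = n•1`, and complementary
index systems, the `m × m` minor vanishes iff the complementary minor vanishes. -/
lemma zmc_key_rat {n : ℕ} (hn : 0 < n) (H : Matrix (Fin n) (Fin n) ℚ)
    (hH : H * Hᵀ = (n : ℚ) • (1 : Matrix (Fin n) (Fin n) ℚ)) {m : ℕ}
    (f g : Fin m → Fin n) (f' g' : Fin (n - m) → Fin n)
    (hf : Function.Bijective (Sum.elim f f')) (hg : Function.Bijective (Sum.elim g g')) :
    (H.submatrix f g).det = 0 ↔ (H.submatrix f' g').det = 0 := by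
  set eF : Fin m ⊕ Fin (n - m) ≃ Fin n := Equiv.ofBijective _ hf with heF
  set eG : Fin m ⊕ Fin (n - m) ≃ Fin n := Equiv.ofBijective _ hg with heG
  set M : Matrix (Fin m ⊕ Fin (n - m)) (Fin m ⊕ Fin (n - m)) ℚ := H.submatrix eF eG with hMdef
  set N : Matrix (Fin m ⊕ Fin (n - m)) (Fin m ⊕ Fin (n - m)) ℚ :=
    ((n : ℚ)⁻¹ • Hᵀ).submatrix eG eF with hNdef
  have hnQ : (n : ℚ) ≠ 0 := Nat.cast_ne_zero.mpr hn.ne'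
  have hMN : M * N = 1 := by
    rw [hMdef, hNdef, submatrix_mul_equiv, mul_smul_comm, hH, smul_smul,
      inv_mul_cancel₀ hnQ, one_smul, submatrix_one_equiv]
  have hdetM : M.det ≠ 0 := by
    intro h
    have := congrArg Matrix.det hMN
    rw [Matrix.det_mul, h, zero_mul, Matrix.det_one] at this
    exact zero_ne_one this
  -- block decompositions
  set A := H.submatrix f g
  set B := H.submatrix f g'
  set C := H.submatrix f' g
  set D := H.submatrix f' g'
  set P := ((n : ℚ)⁻¹ • Hᵀ).submatrix g f
  set Q := ((n : ℚ)⁻¹ • Hᵀ).submatrix g f'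
  set R := ((n : ℚ)⁻¹ • Hᵀ).submatrix g' f
  set S := ((n : ℚ)⁻¹ • Hᵀ).submatrix g' f'
  have hM : M = Matrix.fromBlocks A B C D := by
    ext (i | i) (j | j) <;> rfl
  have hN : N = Matrix.fromBlocks P Q R S := by
    ext (i | i) (j | j) <;> rfl
  have hblocks : Matrix.fromBlocks (A * P + B * R) (A * Q + B * S) (C * P + D * R)
      (C * Q + D * S) = Matrix.fromBlocks 1 0 0 1 := by
    rw [← Matrix.fromBlocks_multiply, ← hM, ← hN, hMN, Matrix.fromBlocks_one]
  have hAQ : A * Q + B * S = 0 := by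
    have := congrArg Matrix.toBlocks₁₂ hblocks
    simp only [Matrix.toBlocks_fromBlocks₁₂] at this
    exact this
  have hCQ : C * Q + D * S = 1 := by
    have := congrArg Matrix.toBlocks₂₂ hblocks
    simp only [Matrix.toBlocks_fromBlocks₂₂] at this
    exact this
  have hprod : M * Matrix.fromBlocks 1 Q 0 S = Matrix.fromBlocks A 0 C 1 := by
    rw [hM, Matrix.fromBlocks_multiply]
    rw [hAQ, hCQ]
    congr 1 <;> simp
  have hdet : M.det * S.det = A.det := by
    have := congrArg Matrix.det hprod
    rwa [Matrix.det_mul, Matrix.det_fromBlocks_zero₂₁, Matrix.det_fromBlocks_zero₁₂,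
      Matrix.det_one, Matrix.det_one, one_mul, mul_one] at this
  have hS : S.det = ((n : ℚ)⁻¹) ^ (n - m) * D.det := by
    have h1 : S = (n : ℚ)⁻¹ • (Hᵀ.submatrix g' f') := by
      ext i j; simp [S, Matrix.submatrix_apply]
    rw [h1, Matrix.det_smul, ← Matrix.transpose_submatrix, Matrix.det_transpose]
    simp [D]
  have hAD : A.det = M.det * (((n : ℚ)⁻¹) ^ (n - m) * D.det) := by
    rw [← hS, hdet]
  rw [hAD]
  constructor
  · intro h
    rcases mul_eq_zero.mp h with h | h
    · exact absurd h hdetM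
    rcases mul_eq_zero.mp h with h | h
    · exact absurd h (pow_ne_zero _ (inv_ne_zero hnQ))
    · exact h
  · intro h
    rw [h, mul_zero, mul_zero]

/-- Transfer of the key lemma to ℤ. -/
lemma zmc_key_int {n : ℕ} (hn : 0 < n) (H : Matrix (Fin n) (Fin n) ℤ)
    (hH : H * Hᵀ = (n : ℤ) • (1 : Matrix (Fin n) (Fin n) ℤ)) {m : ℕ}
    (f g : Fin m → Fin n) (f' g' : Fin (n - m) → Fin n)
    (hf : Function.Bijective (Sum.elim f f')) (hg : Function.Bijective (Sum.elim g g')) :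
    (H.submatrix f g).det = 0 ↔ (H.submatrix f' g').det = 0 := by
  set Hq : Matrix (Fin n) (Fin n) ℚ := H.map (Int.cast : ℤ → ℚ) with hHq
  have hq : Hq * Hqᵀ = (n : ℚ) • (1 : Matrix (Fin n) (Fin n) ℚ) := by
    ext i j
    have := congrFun (congrFun hH i) j
    simp only [Matrix.mul_apply, Matrix.transpose_apply, Matrix.smul_apply, Matrix.one_apply,
      smul_eq_mul] at this ⊢
    simp only [hHq, Matrix.map_apply]
    push_cast
    rw [show (∑ x, (H i x : ℚ) * (H j x : ℚ)) = ((∑ x, H i x * H j x : ℤ) : ℚ) by push_cast; rfl,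
      this]
    split <;> simp
  have hdet : ∀ {k : ℕ} (a b : Fin k → Fin n),
      (H.submatrix a b).det = 0 ↔ (Hq.submatrix a b).det = 0 := by
    intro k a b
    have : Hq.submatrix a b = (H.submatrix a b).map (Int.cast : ℤ → ℚ) := rfl
    rw [this,
      show (H.submatrix a b).map (Int.cast : ℤ → ℚ) =
        (Int.castRingHom ℚ).mapMatrix (H.submatrix a b) from rfl,
      ← RingHom.map_det]
    simp
  rw [hdet f g, hdet f' g']
  exact zmc_key_rat hn Hq hq f g f' g' hf hg

/-- Strict monotone maps `Fin k → Fin n` correspond to `k`-element subsets. -/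
def zmcFinsetEquiv (n k : ℕ) :
    {f : Fin k → Fin n // StrictMono f} ≃ {s : Finset (Fin n) // s.card = k} where
  toFun f := ⟨Finset.univ.image f.1, by
    rw [Finset.card_image_of_injective _ f.2.injective, Finset.card_univ, Fintype.card_fin]⟩
  invFun s := ⟨s.1.orderEmbOfFin s.2, (s.1.orderEmbOfFin s.2).strictMono⟩
  left_inv f := Subtype.ext
    (Finset.orderEmbOfFin_unique _
      (fun x => Finset.mem_image_of_mem _ (Finset.mem_univ x)) f.2).symm
  right_inv s := Subtype.ext (by
    apply Finset.eq_of_subset_of_card_le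
    · intro x hx
      rcases Finset.mem_image.mp hx with ⟨i, _, rfl⟩
      exact Finset.orderEmbOfFin_mem _ _ _
    · rw [Finset.card_image_of_injective _ (s.1.orderEmbOfFin s.2).strictMono.injective,
        Finset.card_univ, Fintype.card_fin, s.2])

/-- Complementation on `k`-subsets of `Fin n`. -/
def zmcComplEquiv (n m : ℕ) (hmn : m ≤ n) :
    {s : Finset (Fin n) // s.card = m} ≃ {s : Finset (Fin n) // s.card = n - m} where
  toFun s := ⟨s.1ᶜ, by rw [Finset.card_compl, s.2, Fintype.card_fin]⟩
  invFun s := ⟨s.1ᶜ, by rw [Finset.card_compl, s.2, Fintype.card_fin]; omega⟩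
  left_inv s := Subtype.ext (compl_compl _)
  right_inv s := Subtype.ext (compl_compl _)

def zmcPhi (n m : ℕ) (hmn : m ≤ n) :
    {f : Fin m → Fin n // StrictMono f} ≃ {f : Fin (n - m) → Fin n // StrictMono f} :=
  ((zmcFinsetEquiv n m).trans (zmcComplEquiv n m hmn)).trans (zmcFinsetEquiv n (n - m)).symm

lemma zmc_elim_bij {n m : ℕ} (hmn : m ≤ n) (f : {f : Fin m → Fin n // StrictMono f}) :
    Function.Bijective (Sum.elim f.1 (zmcPhi n m hmn f).1) := by
  rw [Fintype.bijective_iff_injective_and_card]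
  constructor
  · rintro (x | x) (y | y) h <;> simp only [Sum.elim_inl, Sum.elim_inr] at h
    · exact congrArg Sum.inl (f.2.injective h)
    · exfalso
      have h1 : f.1 x ∈ Finset.univ.image f.1 := Finset.mem_image_of_mem _ (Finset.mem_univ x)
      have h2 : (zmcPhi n m hmn f).1 y ∈ (Finset.univ.image f.1)ᶜ :=
        Finset.orderEmbOfFin_mem _ _ _
      rw [← h] at h2
      exact (Finset.mem_compl.mp h2) h1
    · exfalso
      have h1 : f.1 y ∈ Finset.univ.image f.1 := Finset.mem_image_of_mem _ (Finset.mem_univ y)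
      have h2 : (zmcPhi n m hmn f).1 x ∈ (Finset.univ.image f.1)ᶜ :=
        Finset.orderEmbOfFin_mem _ _ _
      rw [h] at h2
      exact (Finset.mem_compl.mp h2) h1
    · exact congrArg Sum.inr ((zmcPhi n m hmn f).2.injective h)
  · simp [Fintype.card_sum]
    omega

end Aux

/-- For a Hadamard matrix `H` of order `n` and `0 ≤ m ≤ n`:
`Z(m,H) = Z(n-m,H)`, where `Z(k,H)` is the number of `k × k` submatrices of
`H` (over all pairs of strictly monotone index maps `Fin k → Fin n`) with
determinant zero. -/
theorem zero_minors_complement (n m : ℕ) (hmn : m ≤ n)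
    (H : Matrix (Fin n) (Fin n) ℤ) (hH1 : ∀ i j, H i j = 1 ∨ H i j = -1)
    (hH : H * Hᵀ = (n : ℤ) • (1 : Matrix (Fin n) (Fin n) ℤ)) :
    (Finset.univ.filter
        (fun p : {f : Fin m → Fin n // StrictMono f} × {g : Fin m → Fin n // StrictMono g} =>
          (H.submatrix p.1.1 p.2.1).det = 0)).card =
      (Finset.univ.filter
        (fun p : {f : Fin (n - m) → Fin n // StrictMono f} ×
            {g : Fin (n - m) → Fin n // StrictMono g} =>
          (H.submatrix p.1.1 p.2.1).det = 0)).card := by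
  rcases Nat.eq_zero_or_pos n with rfl | hn
  · interval_cases m
    simp [Matrix.det_isEmpty]
  · apply Finset.card_equiv (Equiv.prodCongr (zmcPhi n m hmn) (zmcPhi n m hmn))
    rintro ⟨f, g⟩
    simp only [Finset.mem_filter, Finset.mem_univ, true_and, Equiv.prodCongr_apply, Prod.map]
    exact zmc_key_int hn H hH f.1 g.1 (zmcPhi n m hmn f).1 (zmcPhi n m hmn g).1
      (zmc_elim_bij hmn f) (zmc_elim_bij hmn g)
end
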